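/- Let n ≥ 1 and let p, q ∈ ℂ[x_1, x_2] be (nonhomogeneous) polynomials of degree ≤ n in two variables. Then there exist symmetric complex matrices β^{10}, β^{20}, β^{12}, with rows and columns indexed by pairs (i_1,i_2) ∈ ℕ² with i_1 + i_2 ≤ n−1 (of size n(n+1)/2), such that p(x_1,x_2)q(y_1,y_2) − q(x_1,x_2)p(y_1,y_2) = Σ_{i,j} x_1^{i_1} x_2^{i_2} y_1^{j_1} y_2^{j_2} ( β^{10}_{ij} (x_1 − y_1) + β^{20}_{ij} (x_2 − y_2) + β^{12}_{ij} (x_1 y_2 − x_2 y_1) ) holds for all (x_1,x_2), (y_1,y_2) ∈ ℂ², where the sum runs over all pairs i = (i_1,i_2), j = (j_1,j_2) with i_1 + i_2 ≤ n−1 and j_1 + j_2 ≤ n−1. -/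

import Mathlib

/-
Let `S` be the span of the functions `x^i y^j g(x, y)` with `|i|, |j| < n` and
`g ∈ {x₁ - y₁, x₂ - y₂, x₁y₂ - x₂y₁}`. Each such function is a difference `x^a y^b - x^a' y^b'`
of two monomials with `a + b = a' + b'`: one unit of exponent moves between the `x`- and the
`y`-side, or a unit of `x₁` is traded for one of `x₂`. On the splits `(a, b)` of a fixed total
exponent with `|a|, |b| ≤ n` these moves lead from any split to the lexicographically largest
one, so `x^α y^β ≡ x^β y^α` modulo `S`, and expanding `p(x)q(y) - q(x)p(y)` into monomials puts
it in `S`. Averaging a representation with its image under `x ↔ y` makes the coefficient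
matrices symmetric, because both sides are antisymmetric in `(x, y)`.
-/

/-- Pairs `(i₁,i₂) ∈ ℕ²` with `i₁ + i₂ ≤ n − 1` (i.e. `i₁ + i₂ < n`). -/
abbrev PairIdx (n : ℕ) : Type := {i : ℕ × ℕ // i.1 + i.2 < n}

noncomputable instance (n : ℕ) : Fintype (PairIdx n) :=
  Fintype.ofInjective
    (fun i : PairIdx n =>
      ((⟨i.1.1, by have := i.2; omega⟩ : Fin n), (⟨i.1.2, by have := i.2; omega⟩ : Fin n)))
    (by
      rintro ⟨⟨a1, a2⟩, ha⟩ ⟨⟨b1, b2⟩, hb⟩ hEq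
      simp only [Prod.mk.injEq, Fin.mk.injEq] at hEq
      exact Subtype.ext (by simp [hEq.1, hEq.2]))

theorem exists_symm_coeffs_of_antisymm {R X ι T : Type*} [CommRing R] [Invertible (2 : R)]
    [Fintype ι] [Fintype T] {m : ι → X → R} {g : T → X → X → R} {F : X → X → R}
    (hg : ∀ t x y, g t y x = -g t x y) (hF : ∀ x y, F y x = -F x y)
    {c : ι → ι → T → R}
    (hc : ∀ x y, F x y = ∑ i, ∑ j, m i x * m j y * ∑ t, c i j t * g t x y) :
    ∃ c' : ι → ι → T → R, (∀ i j t, c' i j t = c' j i t) ∧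
      ∀ x y, F x y = ∑ i, ∑ j, m i x * m j y * ∑ t, c' i j t * g t x y := by
  refine ⟨fun i j t => ⅟2 * (c i j t + c j i t), fun i j t => by beta_reduce; rw [add_comm],
    fun x y => ?_⟩
  have hswap : ∑ i, ∑ j, m i x * m j y * ∑ t, c j i t * g t x y = F x y := by
    rw [← neg_neg (F x y), ← hF, hc, Finset.sum_comm]
    simp only [Finset.mul_sum, ← Finset.sum_neg_distrib]
    refine Finset.sum_congr rfl fun i _ => Finset.sum_congr rfl fun j _ =>
      Finset.sum_congr rfl fun t _ => ?_
    rw [hg t y x]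
    ring
  calc F x y = ⅟2 * (F x y + F x y) := by rw [← two_mul, ← mul_assoc, invOf_mul_self, one_mul]
    _ = _ := by
      nth_rw 1 [hc x y]
      rw [← hswap, ← Finset.sum_add_distrib, Finset.mul_sum]
      refine Finset.sum_congr rfl fun i _ => ?_
      rw [← Finset.sum_add_distrib, Finset.mul_sum]
      refine Finset.sum_congr rfl fun j _ => ?_
      simp only [Finset.mul_sum, ← Finset.sum_add_distrib]
      exact Finset.sum_congr rfl fun t _ => by ring

namespace Bezoutian

variable {R : Type*} [CommRing R]

def pairMonomial (a : ℕ × ℕ) (x : R × R) : R := x.1 ^ a.1 * x.2 ^ a.2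

/-- Indexed so that `0, 1, 2` carry the coefficients `β¹⁰, β²⁰, β¹²`. -/
def bezoutGen : Fin 3 → R × R → R × R → R
  | 0, x, y => x.1 - y.1
  | 1, x, y => x.2 - y.2
  | 2, x, y => x.1 * y.2 - x.2 * y.1

theorem bezoutGen_swap (t : Fin 3) (x y : R × R) : bezoutGen t y x = -bezoutGen t x y := by
  fin_cases t <;> (simp only [bezoutGen]; ring)

variable (R) in
def bezoutSpan (n : ℕ) : Submodule R (R × R → R × R → R) :=
  Submodule.span R (Set.range fun w : PairIdx n × PairIdx n × Fin 3 =>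
    fun x y => pairMonomial w.1.1 x * pairMonomial w.2.1.1 y * bezoutGen w.2.2 x y)

theorem generator_mem_bezoutSpan {n : ℕ} (i j : PairIdx n) (t : Fin 3) :
    (fun x y => pairMonomial i.1 x * pairMonomial j.1 y * bezoutGen t x y) ∈ bezoutSpan R n :=
  Submodule.subset_span ⟨(i, j, t), rfl⟩

section Moves

variable {n : ℕ} {a b : ℕ × ℕ}

theorem pairMonomial_sub_shift_fst_mem (ha : a.1 + a.2 < n) (hb : b.1 + b.2 ≤ n)
    (hb₁ : 0 < b.1) :
    (fun x y => pairMonomial a x * pairMonomial b y) -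
        (fun x y => pairMonomial (a.1 + 1, a.2) x * pairMonomial (b.1 - 1, b.2) y) ∈
      bezoutSpan R n := by
  obtain ⟨B, hB⟩ : ∃ B, b.1 = B + 1 := ⟨b.1 - 1, by omega⟩
  convert (bezoutSpan R n).neg_mem (generator_mem_bezoutSpan ⟨a, ha⟩ ⟨(B, b.2), by omega⟩ 0) using 1
  funext x y
  simp only [pairMonomial, bezoutGen, hB, add_tsub_cancel_right, Pi.sub_apply, Pi.neg_apply]
  ring

theorem pairMonomial_sub_shift_snd_mem (ha : a.1 + a.2 < n) (hb : b.1 + b.2 ≤ n)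
    (hb₂ : 0 < b.2) :
    (fun x y => pairMonomial a x * pairMonomial b y) -
        (fun x y => pairMonomial (a.1, a.2 + 1) x * pairMonomial (b.1, b.2 - 1) y) ∈
      bezoutSpan R n := by
  obtain ⟨B, hB⟩ : ∃ B, b.2 = B + 1 := ⟨b.2 - 1, by omega⟩
  convert (bezoutSpan R n).neg_mem (generator_mem_bezoutSpan ⟨a, ha⟩ ⟨(b.1, B), by omega⟩ 1) using 1
  funext x y
  simp only [pairMonomial, bezoutGen, hB, add_tsub_cancel_right, Pi.sub_apply, Pi.neg_apply]
  ring

theorem pairMonomial_sub_exchange_mem (ha : a.1 + a.2 ≤ n) (hb : b.1 + b.2 ≤ n)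
    (ha₂ : 0 < a.2) (hb₁ : 0 < b.1) :
    (fun x y => pairMonomial a x * pairMonomial b y) -
        (fun x y => pairMonomial (a.1 + 1, a.2 - 1) x * pairMonomial (b.1 - 1, b.2 + 1) y) ∈
      bezoutSpan R n := by
  obtain ⟨A, hA⟩ : ∃ A, a.2 = A + 1 := ⟨a.2 - 1, by omega⟩
  obtain ⟨B, hB⟩ : ∃ B, b.1 = B + 1 := ⟨b.1 - 1, by omega⟩
  convert (bezoutSpan R n).neg_mem (generator_mem_bezoutSpan
    ⟨(a.1, A), by omega⟩ ⟨(B, b.2), by omega⟩ 2) using 1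
  funext x y
  simp only [pairMonomial, bezoutGen, hA, hB, add_tsub_cancel_right, Pi.sub_apply,
    Pi.neg_apply]
  ring

end Moves

/-- `c` is the lexicographically largest first exponent among the splits of `a + b` into two
exponents of degree `≤ n`; any other split has a lexicographically larger neighbour under the
three moves above. -/
theorem pairMonomial_sub_lexMax_mem {n : ℕ} {a b c e : ℕ × ℕ}
    (ha : a.1 + a.2 ≤ n) (hb : b.1 + b.2 ≤ n)
    (hc₁ : c.1 = min (a.1 + b.1) n) (hc₂ : c.2 = min (a.2 + b.2) (n - c.1))
    (he₁ : c.1 + e.1 = a.1 + b.1) (he₂ : c.2 + e.2 = a.2 + b.2) :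
    (fun x y => pairMonomial a x * pairMonomial b y) -
      (fun x y => pairMonomial c x * pairMonomial e y) ∈ bezoutSpan R n := by
  by_cases hac : a = c
  · obtain rfl := hac
    obtain rfl : b = e := Prod.ext (by omega) (by omega)
    rw [sub_self]
    exact zero_mem _
  rw [Prod.ext_iff] at hac
  rcases Nat.eq_zero_or_pos b.1 with hb₁ | hb₁
  · have hfree : a.1 + a.2 < n := by omega
    rw [← sub_add_sub_cancel _
      (fun x y => pairMonomial (a.1, a.2 + 1) x * pairMonomial (b.1, b.2 - 1) y)]
    exact add_mem (pairMonomial_sub_shift_snd_mem hfree hb (by omega))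
      (pairMonomial_sub_lexMax_mem (by omega) (by omega) (by omega) (by omega) (by omega)
        (by omega))
  by_cases hfree : a.1 + a.2 < n
  · rw [← sub_add_sub_cancel _
      (fun x y => pairMonomial (a.1 + 1, a.2) x * pairMonomial (b.1 - 1, b.2) y)]
    exact add_mem (pairMonomial_sub_shift_fst_mem hfree hb hb₁)
      (pairMonomial_sub_lexMax_mem (by omega) (by omega) (by omega) (by omega) (by omega)
        (by omega))
  · have ha₂ : 0 < a.2 := by omega
    rw [← sub_add_sub_cancel _
      (fun x y => pairMonomial (a.1 + 1, a.2 - 1) x * pairMonomial (b.1 - 1, b.2 + 1) y)]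
    exact add_mem (pairMonomial_sub_exchange_mem ha hb ha₂ hb₁)
      (pairMonomial_sub_lexMax_mem (by omega) (by omega) (by omega) (by omega) (by omega)
        (by omega))
termination_by (n - a.1, n - a.2)

theorem pairMonomial_sub_swap_mem {n : ℕ} {a b : ℕ × ℕ} (ha : a.1 + a.2 ≤ n)
    (hb : b.1 + b.2 ≤ n) :
    (fun x y => pairMonomial a x * pairMonomial b y) -
      (fun x y => pairMonomial b x * pairMonomial a y) ∈ bezoutSpan R n := by
  obtain ⟨c, hc₁, hc₂⟩ : ∃ c : ℕ × ℕ,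
      c.1 = min (a.1 + b.1) n ∧ c.2 = min (a.2 + b.2) (n - c.1) :=
    ⟨(min (a.1 + b.1) n, min (a.2 + b.2) (n - min (a.1 + b.1) n)), rfl, rfl⟩
  obtain ⟨e, he₁, he₂⟩ : ∃ e : ℕ × ℕ, c.1 + e.1 = a.1 + b.1 ∧ c.2 + e.2 = a.2 + b.2 :=
    ⟨(a.1 + b.1 - c.1, a.2 + b.2 - c.2), by omega, by omega⟩
  rw [← sub_sub_sub_cancel_right _ _ (fun x y => pairMonomial c x * pairMonomial e y)]
  exact sub_mem (pairMonomial_sub_lexMax_mem ha hb hc₁ hc₂ he₁ he₂)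
    (pairMonomial_sub_lexMax_mem hb ha (by omega) (by omega) (by omega) (by omega))

open MvPolynomial in
theorem eval_mul_eval_sub_mem_bezoutSpan {n : ℕ} {p q : MvPolynomial (Fin 2) R}
    (hp : p.totalDegree ≤ n) (hq : q.totalDegree ≤ n) :
    (fun x y : R × R => eval ![x.1, x.2] p * eval ![y.1, y.2] q -
      eval ![x.1, x.2] q * eval ![y.1, y.2] p) ∈ bezoutSpan R n := by
  have hdeg {f : MvPolynomial (Fin 2) R} (hf : f.totalDegree ≤ n) {d : Fin 2 →₀ ℕ}
      (hd : d ∈ f.support) : d 0 + d 1 ≤ n := by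
    have := le_totalDegree hd
    rw [Finsupp.sum_fintype _ _ fun _ => rfl, Fin.sum_univ_two] at this
    omega
  have hexpand : (fun x y : R × R => eval ![x.1, x.2] p * eval ![y.1, y.2] q -
      eval ![x.1, x.2] q * eval ![y.1, y.2] p) =
      ∑ α ∈ p.support, ∑ β ∈ q.support, (coeff α p * coeff β q) •
        ((fun x y => pairMonomial (α 0, α 1) x * pairMonomial (β 0, β 1) y) -
          (fun x y => pairMonomial (β 0, β 1) x * pairMonomial (α 0, α 1) y)) := by
    funext x y
    simp only [eval_eq', Fin.prod_univ_two, Matrix.cons_val_zero, Matrix.cons_val_one,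
      Finset.sum_apply, Pi.smul_apply, Pi.sub_apply, smul_eq_mul, pairMonomial,
      Finset.sum_mul_sum]
    rw [Finset.sum_comm (s := q.support)]
    simp only [← Finset.sum_sub_distrib]
    exact Finset.sum_congr rfl fun α _ => Finset.sum_congr rfl fun β _ => by ring
  rw [hexpand]
  exact Submodule.sum_mem _ fun α hα => Submodule.sum_mem _ fun β hβ =>
    Submodule.smul_mem _ _ (pairMonomial_sub_swap_mem (hdeg hp hα) (hdeg hq hβ))

theorem exists_coeffs_of_mem_bezoutSpan {n : ℕ} {F : R × R → R × R → R}
    (hF : F ∈ bezoutSpan R n) :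
    ∃ c : PairIdx n → PairIdx n → Fin 3 → R, ∀ x y, F x y =
      ∑ i, ∑ j, pairMonomial i.1 x * pairMonomial j.1 y * ∑ t, c i j t * bezoutGen t x y := by
  obtain ⟨c, rfl⟩ := (Submodule.mem_span_range_iff_exists_fun R).1 hF
  refine ⟨fun i j t => c (i, j, t), fun x y => ?_⟩
  simp only [Finset.sum_apply, Pi.smul_apply, smul_eq_mul, Fintype.sum_prod_type, Finset.mul_sum]
  exact Finset.sum_congr rfl fun i _ => Finset.sum_congr rfl fun j _ =>
    Finset.sum_congr rfl fun t _ => by ring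

end Bezoutian

theorem exists_bezout_decomposition_affine
    (n : ℕ) (p q : MvPolynomial (Fin 2) ℂ)
    (hp : p.totalDegree ≤ n) (hq : q.totalDegree ≤ n) :
    ∃ β10 β20 β12 : PairIdx n → PairIdx n → ℂ,
      (∀ i j, β10 i j = β10 j i) ∧ (∀ i j, β20 i j = β20 j i) ∧ (∀ i j, β12 i j = β12 j i) ∧
      ∀ x₁ x₂ y₁ y₂ : ℂ,
        MvPolynomial.eval ![x₁, x₂] p * MvPolynomial.eval ![y₁, y₂] q -
            MvPolynomial.eval ![x₁, x₂] q * MvPolynomial.eval ![y₁, y₂] p =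
          ∑ i : PairIdx n, ∑ j : PairIdx n,
            x₁ ^ i.1.1 * x₂ ^ i.1.2 * y₁ ^ j.1.1 * y₂ ^ j.1.2 *
              (β10 i j * (x₁ - y₁) + β20 i j * (x₂ - y₂) + β12 i j * (x₁ * y₂ - x₂ * y₁)) := by
  obtain ⟨c, hc⟩ := Bezoutian.exists_coeffs_of_mem_bezoutSpan
    (Bezoutian.eval_mul_eval_sub_mem_bezoutSpan hp hq)
  obtain ⟨β, hβ, hF⟩ := exists_symm_coeffs_of_antisymm Bezoutian.bezoutGen_swap
    (fun x y => by ring) hc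
  refine ⟨fun i j => β i j 0, fun i j => β i j 1, fun i j => β i j 2,
    fun i j => hβ i j 0, fun i j => hβ i j 1, fun i j => hβ i j 2, fun x₁ x₂ y₁ y₂ => ?_⟩
  rw [hF (x₁, x₂) (y₁, y₂)]
  simp only [Fin.sum_univ_three, Bezoutian.bezoutGen, Bezoutian.pairMonomial, mul_assoc]
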